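/- arXiv:2009.09690 — 3 statements merged into one kernel-verified Lean document; each statement's English description precedes it below -/
import Mathlib

section
/- Let ĝ(λ₁,λ₂) = λ₁/λ₂ - log(λ₁/λ₂) + log(λ₁λ₂) + 1/(λ₁λ₂). There is no constant c ∈ [-(1+e⁸)/e¹⁴, -(1 + e - 3e⁸ + e⁹)/(e¹⁴(1+e))] such that ĝ(e,1) ≥ ĝ(e⁴,e³) + ∂ĝ/∂λ₁(e⁴,e³)·(e - e⁴) + ∂ĝ/∂λ₂(e⁴,e³)·(1 - e³) + c·(e - e⁴)·(1 - e³), where e = exp(1). -/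
noncomputable def gHat (l1 l2 : ℝ) : ℝ :=
  l1 / l2 - Real.log (l1 / l2) + Real.log (l1 * l2) + 1 / (l1 * l2)

/-!
The right-hand side is increasing in `c`, because `(e - e⁴)(1 - e³) > 0`, so it suffices to
refute the inequality at the lower end `c = -(1 + e⁸)/e¹⁴`. There, after multiplying by `e¹³`,
it becomes `e¹⁴ + e¹² + e⁸ + 1 ≥ 4e¹³ + 2e¹¹ + 2e¹⁰ + 2e⁶`, which fails for every `1 < e < 3`
since `e² + 1 < 4e` and `e⁸ + 1 < 2e¹¹` there.
-/

open Real

lemma gHat_of_pos {x y : ℝ} (hx : 0 < x) (hy : 0 < y) :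
    gHat x y = x / y + 2 * log y + 1 / (x * y) := by
  rw [gHat, log_div hx.ne' hy.ne', log_mul hx.ne' hy.ne']
  ring

lemma gHat_exp_one_one : gHat (exp 1) 1 = exp 1 + 1 / exp 1 := by
  simp [gHat_of_pos (exp_pos 1) one_pos]

lemma gHat_exp_one_pow_four_pow_three :
    gHat (exp 1 ^ 4) (exp 1 ^ 3) = exp 1 + 6 + 1 / exp 1 ^ 7 := by
  have he : exp 1 ≠ 0 := (exp_pos 1).ne'
  rw [gHat_of_pos (by positivity) (by positivity), log_pow, log_exp]
  field_simp
  ring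

lemma tangent_plane_lower_end_lt {x : ℝ} (h1 : 1 < x) (h3 : x < 3) :
    x + 1 / x < x + 6 + 1 / x ^ 7 + (x ^ 8 - 1) / x ^ 11 * (x - x ^ 4)
      + -(x ^ 7 * (x - 2) + 1) / x ^ 10 * (1 - x ^ 3)
      + -(1 + x ^ 8) / x ^ 14 * (x - x ^ 4) * (1 - x ^ 3) := by
  have hx : 0 < x := by linarith
  have hquad : x ^ 2 + 1 < 4 * x := by nlinarith
  have hhigh : x ^ 14 + x ^ 12 < 4 * x ^ 13 := by
    nlinarith [mul_lt_mul_of_pos_right hquad (pow_pos hx 12)]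
  have hlow : x ^ 8 + 1 < 2 * x ^ 11 := by
    have h8 : x ^ 8 < x ^ 11 := pow_lt_pow_right₀ h1 (by norm_num)
    linarith [one_lt_pow₀ h1 (by norm_num : 11 ≠ 0)]
  rw [← sub_pos]
  have hdiff : x + 6 + 1 / x ^ 7 + (x ^ 8 - 1) / x ^ 11 * (x - x ^ 4)
      + -(x ^ 7 * (x - 2) + 1) / x ^ 10 * (1 - x ^ 3)
      + -(1 + x ^ 8) / x ^ 14 * (x - x ^ 4) * (1 - x ^ 3) - (x + 1 / x)
      = (4 * x ^ 13 + 2 * x ^ 11 + 2 * x ^ 10 + 2 * x ^ 6 - x ^ 14 - x ^ 12 - x ^ 8 - 1)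
        / x ^ 13 := by
    field_simp
    ring
  rw [hdiff]
  apply div_pos _ (by positivity)
  nlinarith [pow_pos hx 10, pow_pos hx 6]

lemma tangent_plane_lt_of_le {x c : ℝ} (h1 : 1 < x) (h3 : x < 3)
    (hc : -(1 + x ^ 8) / x ^ 14 ≤ c) :
    x + 1 / x < x + 6 + 1 / x ^ 7 + (x ^ 8 - 1) / x ^ 11 * (x - x ^ 4)
      + -(x ^ 7 * (x - 2) + 1) / x ^ 10 * (1 - x ^ 3)
      + c * (x - x ^ 4) * (1 - x ^ 3) := by
  have hcoeff : 0 < (x - x ^ 4) * (1 - x ^ 3) := by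
    have h3' : 1 < x ^ 3 := one_lt_pow₀ h1 (by norm_num)
    exact mul_pos_of_neg_of_neg (by nlinarith) (by linarith)
  have hmono := mul_le_mul_of_nonneg_right hc hcoeff.le
  linarith [tangent_plane_lower_end_lt h1 h3]

theorem no_admissible_c :
    ¬ ∃ c : ℝ,
      c ∈ Set.Icc (-(1 + Real.exp 1 ^ 8) / Real.exp 1 ^ 14)
          (-(1 + Real.exp 1 - 3 * Real.exp 1 ^ 8 + Real.exp 1 ^ 9) /
            (Real.exp 1 ^ 14 * (1 + Real.exp 1))) ∧
      gHat (Real.exp 1) 1 ≥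
        gHat (Real.exp 1 ^ 4) (Real.exp 1 ^ 3)
          + (Real.exp 1 ^ 8 - 1) / Real.exp 1 ^ 11 * (Real.exp 1 - Real.exp 1 ^ 4)
          + -(Real.exp 1 ^ 7 * (Real.exp 1 - 2) + 1) / Real.exp 1 ^ 10 * (1 - Real.exp 1 ^ 3)
          + c * (Real.exp 1 - Real.exp 1 ^ 4) * (1 - Real.exp 1 ^ 3) := by
  rintro ⟨c, ⟨hc, -⟩, hineq⟩
  rw [gHat_exp_one_one, gHat_exp_one_pow_four_pow_three] at hineq
  have h1 : 1 < exp 1 := by linarith [exp_one_gt_two]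
  exact (tangent_plane_lt_of_le h1 exp_one_lt_three hc).not_ge hineq
end

section
/- Let W : GL⁺(2) → ℝ be of the form W(F) = ĥ(K(F)) + f(det F), where K(F) = λ_max(F)/λ_min(F), ĥ : [1,∞) → ℝ and f : (0,∞) → ℝ are lower semicontinuous with ĥ(t) → ∞ as t → ∞, f(t) → ∞ as t → ∞, and f(t) → ∞ as t → 0⁺. Then every sublevel set S_c = {F ∈ GL⁺(2) | W(F) ≤ c} is compact. -/
noncomputable def smax (F : Matrix (Fin 2) (Fin 2) ℝ) : ℝ :=
  Real.sqrt (((F.transpose * F).trace + Real.sqrt ((F.transpose * F).trace ^ 2 - 4 * F.det ^ 2)) / 2)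

noncomputable def smin (F : Matrix (Fin 2) (Fin 2) ℝ) : ℝ :=
  Real.sqrt (((F.transpose * F).trace - Real.sqrt ((F.transpose * F).trace ^ 2 - 4 * F.det ^ 2)) / 2)

/-!
With `K = smax / smin`, the map `F ↦ (K F, det F)` is proper on `GL⁺(2)`: a lower bound on
`det F` keeps `F` away from `det = 0`, and `|F|² = smax² + smin² ≤ 2 smax² = 2 K det F` bounds
the entries. So it suffices that `(k, d) ↦ ĥ k + f d` has compact sublevel sets on
`[1, ∞) × (0, ∞)`. This holds for each summand on its half-line, since a lower semicontinuous
function tending to `∞` at the open ends has compact sublevel sets; and a sum of two such functions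
in separate variables again has compact sublevel sets, because each summand is bounded below.
-/

open Set Filter Topology

section SublevelSets

variable {X Y : Type*} [TopologicalSpace X] [TopologicalSpace Y]

def HasCompactSublevelsOn (g : X → ℝ) (s : Set X) : Prop :=
  ∀ c, IsCompact (s ∩ g ⁻¹' Iic c)

lemma LowerSemicontinuousOn.hasCompactSublevelsOn {g : X → ℝ} {s : Set X}
    (hg : LowerSemicontinuousOn g s)
    (hbound : ∀ c, ∃ K, IsCompact K ∧ K ⊆ s ∧ s ∩ g ⁻¹' Iic c ⊆ K) :
    HasCompactSublevelsOn g s := by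
  intro c
  obtain ⟨K, hK, hKs, hsub⟩ := hbound c
  obtain ⟨v, hv, hsv⟩ := lowerSemicontinuousOn_iff_preimage_Iic.mp hg c
  rw [hsv] at hsub ⊢
  have : s ∩ v = K ∩ v :=
    Subset.antisymm (subset_inter hsub inter_subset_right) (inter_subset_inter_left v hKs)
  rw [this]
  exact hK.inter_right hv

lemma HasCompactSublevelsOn.bddBelow {g : X → ℝ} {s : Set X} (hg : HasCompactSublevelsOn g s)
    (hlsc : LowerSemicontinuousOn g s) : BddBelow (g '' s) := by
  obtain ⟨m, hm⟩ := (hlsc.mono inter_subset_left).bddBelow_of_isCompact (hg 0)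
  refine ⟨min m 0, ?_⟩
  rintro _ ⟨x, hx, rfl⟩
  rcases le_or_gt (g x) 0 with hle | hlt
  · exact (min_le_left _ _).trans (hm ⟨x, ⟨hx, hle⟩, rfl⟩)
  · exact (min_le_right _ _).trans hlt.le

lemma HasCompactSublevelsOn.prod_add {g : X → ℝ} {h : Y → ℝ} {s : Set X} {t : Set Y}
    (hg : HasCompactSublevelsOn g s) (hg_lsc : LowerSemicontinuousOn g s)
    (hh : HasCompactSublevelsOn h t) (hh_lsc : LowerSemicontinuousOn h t) :
    HasCompactSublevelsOn (fun p : X × Y => g p.1 + h p.2) (s ×ˢ t) := by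
  have hlsc : LowerSemicontinuousOn (fun p : X × Y => g p.1 + h p.2) (s ×ˢ t) :=
    (hg_lsc.comp continuousOn_fst mapsTo_fst_prod).add
      (hh_lsc.comp continuousOn_snd mapsTo_snd_prod)
  refine hlsc.hasCompactSublevelsOn fun c => ?_
  obtain ⟨mg, hmg⟩ := hg.bddBelow hg_lsc
  obtain ⟨mh, hmh⟩ := hh.bddBelow hh_lsc
  refine ⟨(s ∩ g ⁻¹' Iic (c - mh)) ×ˢ (t ∩ h ⁻¹' Iic (c - mg)), (hg _).prod (hh _),
    prod_mono inter_subset_left inter_subset_left, ?_⟩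
  rintro ⟨x, y⟩ ⟨⟨hx, hy⟩, hxy⟩
  have hgx : mg ≤ g x := hmg ⟨x, hx, rfl⟩
  have hhy : mh ≤ h y := hmh ⟨y, hy, rfl⟩
  simp only [mem_preimage, mem_Iic] at hxy
  exact ⟨⟨hx, show g x ≤ c - mh by linarith⟩, ⟨hy, show h y ≤ c - mg by linarith⟩⟩

lemma hasCompactSublevelsOn_Ici {g : ℝ → ℝ} {a : ℝ} (hg : LowerSemicontinuousOn g (Ici a))
    (htop : Tendsto g atTop atTop) : HasCompactSublevelsOn g (Ici a) := by
  refine hg.hasCompactSublevelsOn fun c => ?_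
  obtain ⟨R, hR⟩ := (htop.eventually_gt_atTop c).exists_forall_of_atTop
  refine ⟨Icc a R, isCompact_Icc, Icc_subset_Ici_self, fun x ⟨hax, hxc⟩ => ⟨hax, ?_⟩⟩
  exact le_of_not_ge fun hRx => (hR x hRx).not_ge hxc

lemma hasCompactSublevelsOn_Ioi {g : ℝ → ℝ} {a : ℝ} (hg : LowerSemicontinuousOn g (Ioi a))
    (htop : Tendsto g atTop atTop) (hright : Tendsto g (𝓝[>] a) atTop) :
    HasCompactSublevelsOn g (Ioi a) := by
  refine hg.hasCompactSublevelsOn fun c => ?_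
  obtain ⟨R, hR⟩ := (htop.eventually_gt_atTop c).exists_forall_of_atTop
  obtain ⟨b, hab, hb⟩ := (nhdsGT_basis a).eventually_iff.mp (hright.eventually_gt_atTop c)
  refine ⟨Icc b R, isCompact_Icc, fun x hx => hab.trans_le hx.1, fun x ⟨hax, hxc⟩ => ⟨?_, ?_⟩⟩
  · exact le_of_not_gt fun hxb => (hb ⟨hax, hxb⟩).not_ge hxc
  · exact le_of_not_ge fun hRx => (hR x hRx).not_ge hxc

end SublevelSets

section SingularValues

variable (F : Matrix (Fin 2) (Fin 2) ℝ)

lemma trace_transpose_mul_self_fin_two :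
    (F.transpose * F).trace = F 0 0 ^ 2 + F 0 1 ^ 2 + F 1 0 ^ 2 + F 1 1 ^ 2 := by
  simp only [Matrix.trace_fin_two, Matrix.mul_apply, Fin.sum_univ_two, Matrix.transpose_apply]
  ring

lemma sqrt_discr_le_trace :
    Real.sqrt ((F.transpose * F).trace ^ 2 - 4 * F.det ^ 2) ≤ (F.transpose * F).trace := by
  have htr : 0 ≤ (F.transpose * F).trace := by
    rw [trace_transpose_mul_self_fin_two]; positivity
  exact Real.sqrt_le_iff.mpr ⟨htr, by nlinarith [sq_nonneg F.det]⟩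

lemma four_mul_det_sq_le_trace_sq : 4 * F.det ^ 2 ≤ (F.transpose * F).trace ^ 2 := by
  rw [trace_transpose_mul_self_fin_two, Matrix.det_fin_two]
  nlinarith [sq_nonneg (F 0 0 ^ 2 + F 0 1 ^ 2 - F 1 0 ^ 2 - F 1 1 ^ 2),
    sq_nonneg (F 0 0 * F 1 0 + F 0 1 * F 1 1)]

lemma smax_sq : smax F ^ 2 =
    ((F.transpose * F).trace + Real.sqrt ((F.transpose * F).trace ^ 2 - 4 * F.det ^ 2)) / 2 := by
  have hr := Real.sqrt_nonneg ((F.transpose * F).trace ^ 2 - 4 * F.det ^ 2)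
  exact Real.sq_sqrt (by linarith [sqrt_discr_le_trace F])

lemma smin_sq : smin F ^ 2 =
    ((F.transpose * F).trace - Real.sqrt ((F.transpose * F).trace ^ 2 - 4 * F.det ^ 2)) / 2 :=
  Real.sq_sqrt (by linarith [sqrt_discr_le_trace F])

lemma smax_sq_add_smin_sq : smax F ^ 2 + smin F ^ 2 = (F.transpose * F).trace := by
  rw [smax_sq, smin_sq]; ring

lemma smin_le_smax : smin F ≤ smax F :=
  Real.sqrt_le_sqrt (by linarith [Real.sqrt_nonneg ((F.transpose * F).trace ^ 2 - 4 * F.det ^ 2)])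

lemma smax_mul_smin : smax F * smin F = |F.det| := by
  have hr := Real.sq_sqrt (sub_nonneg.mpr (four_mul_det_sq_le_trace_sq F))
  have hprod : (smax F * smin F) ^ 2 = |F.det| ^ 2 := by
    rw [mul_pow, smax_sq, smin_sq, sq_abs]; nlinarith
  exact (pow_left_inj₀ (mul_nonneg (Real.sqrt_nonneg _) (Real.sqrt_nonneg _)) (abs_nonneg _)
    two_ne_zero).mp hprod

variable {F}

lemma smin_pos (hF : F.det ≠ 0) : 0 < smin F := by
  have hne : smin F ≠ 0 := fun h => hF (by simpa [h] using (smax_mul_smin F).symm)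
  exact lt_of_le_of_ne (Real.sqrt_nonneg _) hne.symm

lemma one_le_smax_div_smin (hF : F.det ≠ 0) : 1 ≤ smax F / smin F :=
  (one_le_div (smin_pos hF)).mpr (smin_le_smax F)

lemma sq_entry_le_two_mul_smax_div_smin_mul_abs_det (hF : F.det ≠ 0) (i j : Fin 2) :
    F i j ^ 2 ≤ 2 * (smax F / smin F) * |F.det| := by
  have hentry : F i j ^ 2 ≤ smax F ^ 2 + smin F ^ 2 := by
    rw [smax_sq_add_smin_sq, trace_transpose_mul_self_fin_two]
    fin_cases i <;> fin_cases j <;> simp <;>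
      nlinarith [sq_nonneg (F 0 0), sq_nonneg (F 0 1), sq_nonneg (F 1 0), sq_nonneg (F 1 1)]
  have hsmin_sq : smin F ^ 2 ≤ smax F ^ 2 :=
    pow_le_pow_left₀ (Real.sqrt_nonneg _) (smin_le_smax F) 2
  calc F i j ^ 2 ≤ 2 * smax F ^ 2 := by linarith
    _ = 2 * (smax F / smin F) * (smax F * smin F) := by field_simp [(smin_pos hF).ne']
    _ = 2 * (smax F / smin F) * |F.det| := by rw [smax_mul_smin]

end SingularValues

lemma continuous_smax : Continuous smax := by
  unfold smax
  simp only [trace_transpose_mul_self_fin_two, Matrix.det_fin_two]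
  fun_prop

lemma continuous_smin : Continuous smin := by
  unfold smin
  simp only [trace_transpose_mul_self_fin_two, Matrix.det_fin_two]
  fun_prop

lemma isCompact_setOf_smax_div_smin_det_mem {C : Set (ℝ × ℝ)} (hC : IsCompact C)
    (hC_pos : ∀ p ∈ C, 0 < p.2) :
    IsCompact {F : Matrix (Fin 2) (Fin 2) ℝ | (smax F / smin F, F.det) ∈ C} := by
  obtain ⟨δ, hδ, hδC⟩ := hC.exists_forall_le' continuousOn_snd hC_pos
  obtain ⟨B, hB⟩ := hC.exists_bound_of_continuousOn (f := fun p => p.1 * p.2) (by fun_prop)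
  set S := {F : Matrix (Fin 2) (Fin 2) ℝ | (smax F / smin F, F.det) ∈ C}
  have hdet_ge : ∀ F ∈ S, δ ≤ F.det := fun F hF => hδC _ hF
  have hclosed : IsClosed S := by
    have hcont : ContinuousOn (fun F : Matrix (Fin 2) (Fin 2) ℝ => (smax F / smin F, F.det))
        {F | δ ≤ F.det} :=
      (continuous_smax.continuousOn.div continuous_smin.continuousOn
        fun F hF => (smin_pos (hδ.trans_le hF).ne').ne').prodMk
        continuous_id.matrix_det.continuousOn
    have := hcont.preimage_isClosed_of_isClosed
      (isClosed_le continuous_const continuous_id.matrix_det) hC.isClosed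
    exact (inter_eq_right.mpr hdet_ge).symm ▸ this
  have hbox : S ⊆ univ.pi fun _ => univ.pi fun _ => Icc (-√(2 * B)) √(2 * B) := by
    intro F hF i _ j _
    have hdet : 0 < F.det := hδ.trans_le (hdet_ge F hF)
    have hKd : smax F / smin F * F.det ≤ B := (le_abs_self _).trans (hB _ hF)
    refine abs_le.mp (Real.abs_le_sqrt ?_)
    calc F i j ^ 2 ≤ 2 * (smax F / smin F) * |F.det| :=
          sq_entry_le_two_mul_smax_div_smin_mul_abs_det hdet.ne' i j
      _ ≤ 2 * B := by rw [abs_of_pos hdet]; linarith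
  exact (isCompact_univ_pi fun _ => isCompact_univ_pi fun _ => isCompact_Icc).of_isClosed_subset
    hclosed hbox

theorem sublevel_sets_compact (hhat f : ℝ → ℝ)
    (hh_lsc : LowerSemicontinuousOn hhat (Set.Ici 1))
    (hf_lsc : LowerSemicontinuousOn f (Set.Ioi 0))
    (hh_top : Filter.Tendsto hhat Filter.atTop Filter.atTop)
    (hf_top : Filter.Tendsto f Filter.atTop Filter.atTop)
    (hf_zero : Filter.Tendsto f (nhdsWithin 0 (Set.Ioi 0)) Filter.atTop)
    (c : ℝ) :
    IsCompact {F : Matrix (Fin 2) (Fin 2) ℝ |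
      0 < F.det ∧ hhat (smax F / smin F) + f F.det ≤ c} := by
  have hW : HasCompactSublevelsOn (fun p : ℝ × ℝ => hhat p.1 + f p.2) (Ici 1 ×ˢ Ioi 0) :=
    (hasCompactSublevelsOn_Ici hh_lsc hh_top).prod_add hh_lsc
      (hasCompactSublevelsOn_Ioi hf_lsc hf_top hf_zero) hf_lsc
  convert isCompact_setOf_smax_div_smin_det_mem (hW c) fun p hp => hp.1.2 using 1
  ext F
  exact ⟨fun ⟨hdet, hle⟩ => ⟨⟨one_le_smax_div_smin hdet.ne', hdet⟩, hle⟩,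
    fun ⟨⟨_, hdet⟩, hle⟩ => ⟨hdet, hle⟩⟩
end

section
/- Let W : GL⁺(2) → ℝ be of the form W(F) = ĥ(K(F)) + f(det F), where ĥ : [1,∞) → ℝ is monotone and f : (0,∞) → ℝ is q-convex (all sublevel sets of f are intervals). Then every sublevel set {F ∈ GL⁺(2) | W(F) ≤ c} is path-connected. -/
/-!
Write a real `2 × 2` matrix as the map `ξ ↦ z ξ + w conj ξ` on `ℂ`: its singular values are
`‖z‖ ± ‖w‖` and its determinant is `‖z‖² - ‖w‖²`. Shrinking `w` to `0` while rescaling and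
rotating `z` so that the determinant stays fixed lowers the distortion `K`, so by monotonicity of
`ĥ` the path stays in the sublevel set and joins `F` to the scalar matrix `√(det F) • 1`. The scalar
matrices `√t • 1` of the sublevel set are those with `t` in the sublevel set of `f` at height
`c - ĥ 1`, an interval, so they are joined among themselves.
-/

open Complex Set Matrix

/-- The matrix, in the real basis `1, I` of `ℂ`, of the `ℝ`-linear map `ξ ↦ z * ξ + w * conj ξ`. -/
def wirtingerMatrix (z w : ℂ) : Matrix (Fin 2) (Fin 2) ℝ :=
  !![z.re + w.re, w.im - z.im; z.im + w.im, z.re - w.re]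

theorem exists_wirtingerMatrix_eq (F : Matrix (Fin 2) (Fin 2) ℝ) :
    ∃ z w, wirtingerMatrix z w = F :=
  ⟨⟨(F 0 0 + F 1 1) / 2, (F 1 0 - F 0 1) / 2⟩, ⟨(F 0 0 - F 1 1) / 2, (F 0 1 + F 1 0) / 2⟩, by
    ext i j; fin_cases i <;> fin_cases j <;> simp [wirtingerMatrix] <;> ring⟩

@[fun_prop]
theorem Continuous.wirtingerMatrix {α : Type*} [TopologicalSpace α] {z w : α → ℂ}
    (hz : Continuous z) (hw : Continuous w) :
    Continuous fun x ↦ wirtingerMatrix (z x) (w x) := by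
  refine continuous_matrix fun i j ↦ ?_
  fin_cases i <;> fin_cases j <;> simp only [_root_.wirtingerMatrix] <;> simp <;> fun_prop

theorem det_wirtingerMatrix (z w : ℂ) : (wirtingerMatrix z w).det = ‖z‖ ^ 2 - ‖w‖ ^ 2 := by
  simp only [wirtingerMatrix, det_fin_two_of, Complex.sq_norm, normSq_apply]
  ring

theorem trace_transpose_mul_wirtingerMatrix (z w : ℂ) :
    ((wirtingerMatrix z w).transpose * wirtingerMatrix z w).trace =
      2 * (‖z‖ ^ 2 + ‖w‖ ^ 2) := by
  simp [wirtingerMatrix, trace_fin_two, mul_apply, Fin.sum_univ_two, Complex.sq_norm, normSq_apply]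
  ring

theorem sqrt_discr_wirtingerMatrix (z w : ℂ) :
    √(((wirtingerMatrix z w).transpose * wirtingerMatrix z w).trace ^ 2 -
        4 * (wirtingerMatrix z w).det ^ 2) = 4 * ‖z‖ * ‖w‖ := by
  rw [trace_transpose_mul_wirtingerMatrix, det_wirtingerMatrix,
    show (2 * (‖z‖ ^ 2 + ‖w‖ ^ 2)) ^ 2 - 4 * (‖z‖ ^ 2 - ‖w‖ ^ 2) ^ 2 = (4 * ‖z‖ * ‖w‖) ^ 2 by ring]
  exact Real.sqrt_sq (by positivity)

theorem smax_wirtingerMatrix (z w : ℂ) : smax (wirtingerMatrix z w) = ‖z‖ + ‖w‖ := by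
  rw [smax, sqrt_discr_wirtingerMatrix, trace_transpose_mul_wirtingerMatrix,
    show (2 * (‖z‖ ^ 2 + ‖w‖ ^ 2) + 4 * ‖z‖ * ‖w‖) / 2 = (‖z‖ + ‖w‖) ^ 2 by ring]
  exact Real.sqrt_sq (by positivity)

theorem smin_wirtingerMatrix (z w : ℂ) : smin (wirtingerMatrix z w) = |‖z‖ - ‖w‖| := by
  rw [smin, sqrt_discr_wirtingerMatrix, trace_transpose_mul_wirtingerMatrix,
    show (2 * (‖z‖ ^ 2 + ‖w‖ ^ 2) - 4 * ‖z‖ * ‖w‖) / 2 = (‖z‖ - ‖w‖) ^ 2 by ring]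
  exact Real.sqrt_sq_eq_abs _

theorem add_div_sub_le_add_div_sub {a b a' b' : ℝ} (h : b < a) (h' : b' < a')
    (hcross : b' * a ≤ b * a') : (a' + b') / (a' - b') ≤ (a + b) / (a - b) := by
  rw [div_le_div_iff₀ (sub_pos.2 h') (sub_pos.2 h)]
  linarith

theorem one_le_add_div_sub {a b : ℝ} (hb : 0 ≤ b) (h : b < a) : 1 ≤ (a + b) / (a - b) :=
  (one_le_div (sub_pos.2 h)).2 (by linarith)

section Sublevel

variable (hhat f : ℝ → ℝ) (c : ℝ)

def energySublevel : Set (Matrix (Fin 2) (Fin 2) ℝ) :=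
  {F | 0 < F.det ∧ hhat (smax F / smin F) + f F.det ≤ c}

variable {hhat f c}

theorem wirtingerMatrix_mem_energySublevel_iff {z w : ℂ} :
    wirtingerMatrix z w ∈ energySublevel hhat f c ↔
      ‖w‖ < ‖z‖ ∧ hhat ((‖z‖ + ‖w‖) / (‖z‖ - ‖w‖)) + f (‖z‖ ^ 2 - ‖w‖ ^ 2) ≤ c := by
  have hdet : 0 < ‖z‖ ^ 2 - ‖w‖ ^ 2 ↔ ‖w‖ < ‖z‖ := by
    rw [sub_pos]
    exact pow_lt_pow_iff_left₀ (norm_nonneg w) (norm_nonneg z) two_ne_zero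
  rw [energySublevel, mem_ofPred_eq, smax_wirtingerMatrix, smin_wirtingerMatrix,
    det_wirtingerMatrix, hdet]
  exact and_congr_right fun h ↦ by rw [abs_of_pos (sub_pos.2 h)]

theorem wirtingerMatrix_sqrt_mem_energySublevel_iff {t : ℝ} :
    wirtingerMatrix (√t : ℂ) 0 ∈ energySublevel hhat f c ↔ 0 < t ∧ hhat 1 + f t ≤ c := by
  rw [wirtingerMatrix_mem_energySublevel_iff, norm_zero, norm_real,
    Real.norm_of_nonneg (Real.sqrt_nonneg t), Real.sqrt_pos, add_zero, sub_zero]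
  exact and_congr_right fun ht ↦ by
    rw [div_self (Real.sqrt_pos.2 ht).ne', Real.sq_sqrt ht.le, zero_pow two_ne_zero, sub_zero]

theorem mem_energySublevel_of_dilatation_le (hh : MonotoneOn hhat (Ici 1)) {z w z' w' : ℂ}
    (hmem : wirtingerMatrix z w ∈ energySublevel hhat f c) (h' : ‖w'‖ < ‖z'‖)
    (hdet : ‖z'‖ ^ 2 - ‖w'‖ ^ 2 = ‖z‖ ^ 2 - ‖w‖ ^ 2) (hcross : ‖w'‖ * ‖z‖ ≤ ‖w‖ * ‖z'‖) :
    wirtingerMatrix z' w' ∈ energySublevel hhat f c := by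
  obtain ⟨h, hle⟩ := wirtingerMatrix_mem_energySublevel_iff.1 hmem
  refine wirtingerMatrix_mem_energySublevel_iff.2 ⟨h', ?_⟩
  rw [hdet]
  grw [hh (one_le_add_div_sub (norm_nonneg w') h') (one_le_add_div_sub (norm_nonneg w) h)
    (add_div_sub_le_add_div_sub h h' hcross)]
  exact hle

theorem joinedIn_wirtingerMatrix_sqrt_det (hh : MonotoneOn hhat (Ici 1))
    {F : Matrix (Fin 2) (Fin 2) ℝ} (hF : F ∈ energySublevel hhat f c) :
    JoinedIn (energySublevel hhat f c) (wirtingerMatrix (√F.det : ℂ) 0) F := by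
  obtain ⟨z, w, rfl⟩ := exists_wirtingerMatrix_eq F
  have hwz := (wirtingerMatrix_mem_energySublevel_iff.1 hF).1
  rw [det_wirtingerMatrix]
  set d := ‖z‖ ^ 2 - ‖w‖ ^ 2 with hd_def
  have hd : 0 < d := by nlinarith [norm_nonneg w]
  set ρ : ℝ → ℝ := fun u ↦ √(d + u ^ 2 * ‖w‖ ^ 2) with hρ_def
  refine JoinedIn.ofLine
    (f := fun u : ℝ ↦ wirtingerMatrix (ρ u * exp ((u * arg z : ℝ) * I)) (u * w)) ?_ ?_ ?_ ?_
  · exact Continuous.continuousOn (by fun_prop)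
  · simp [hρ_def]
  · simp [hρ_def, hd_def, norm_mul_exp_arg_mul_I]
  · rintro _ ⟨u, ⟨hu0, hu1⟩, rfl⟩
    have hρ : ρ u ^ 2 = d + u ^ 2 * ‖w‖ ^ 2 := Real.sq_sqrt (by positivity)
    have hnz : ‖(ρ u : ℂ) * exp ((u * arg z : ℝ) * I)‖ = ρ u := by
      rw [norm_mul, norm_exp_ofReal_mul_I, norm_real, Real.norm_of_nonneg (Real.sqrt_nonneg _),
        mul_one]
    have hnw : ‖(u : ℂ) * w‖ = u * ‖w‖ := by rw [norm_mul, norm_real, Real.norm_of_nonneg hu0]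
    refine mem_energySublevel_of_dilatation_le hh hF ?_ ?_ ?_ <;> rw [hnz, hnw]
    · exact (Real.lt_sqrt (by positivity)).2 (by linarith)
    · rw [hρ]; ring
    · have huz : u * ‖z‖ ≤ ρ u := by
        refine (Real.le_sqrt (by positivity) (by positivity)).2 ?_
        rw [mul_pow, show ‖z‖ ^ 2 = d + ‖w‖ ^ 2 by rw [hd_def]; ring]
        nlinarith [mul_le_mul_of_nonneg_right (show u ^ 2 ≤ 1 by nlinarith) hd.le]
      nlinarith [norm_nonneg w]

theorem joinedIn_wirtingerMatrix_sqrt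
    (hf : Convex ℝ {t : ℝ | t ∈ Ioi (0 : ℝ) ∧ f t ≤ c - hhat 1}) {s t : ℝ}
    (hs : wirtingerMatrix (√s : ℂ) 0 ∈ energySublevel hhat f c)
    (ht : wirtingerMatrix (√t : ℂ) 0 ∈ energySublevel hhat f c) :
    JoinedIn (energySublevel hhat f c) (wirtingerMatrix (√s : ℂ) 0)
      (wirtingerMatrix (√t : ℂ) 0) := by
  have hmem {r : ℝ} : wirtingerMatrix (√r : ℂ) 0 ∈ energySublevel hhat f c ↔
      r ∈ {t : ℝ | t ∈ Ioi (0 : ℝ) ∧ f t ≤ c - hhat 1} :=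
    wirtingerMatrix_sqrt_mem_energySublevel_iff.trans (and_congr_right' le_sub_iff_add_le'.symm)
  have hst := (hf.isPathConnected ⟨s, hmem.1 hs⟩).joinedIn s (hmem.1 hs) t (hmem.1 ht)
  exact (hst.map (f := fun r : ℝ ↦ wirtingerMatrix (√r : ℂ) 0) (by fun_prop)).mono
    (image_subset_iff.2 fun _ ↦ hmem.2)

end Sublevel

theorem sublevel_sets_pathConnected (hhat f : ℝ → ℝ)
    (hh_mono : MonotoneOn hhat (Set.Ici 1))
    (hf_qconvex : ∀ c' : ℝ, Convex ℝ {t : ℝ | t ∈ Set.Ioi (0 : ℝ) ∧ f t ≤ c'})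
    (c : ℝ) :
    ∀ F ∈ {F : Matrix (Fin 2) (Fin 2) ℝ |
        0 < F.det ∧ hhat (smax F / smin F) + f F.det ≤ c},
      ∀ G ∈ {F : Matrix (Fin 2) (Fin 2) ℝ |
        0 < F.det ∧ hhat (smax F / smin F) + f F.det ≤ c},
      JoinedIn {F : Matrix (Fin 2) (Fin 2) ℝ |
        0 < F.det ∧ hhat (smax F / smin F) + f F.det ≤ c} F G := by
  intro F hF G hG
  have hFs := joinedIn_wirtingerMatrix_sqrt_det hh_mono hF
  have hGs := joinedIn_wirtingerMatrix_sqrt_det hh_mono hG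
  exact (hFs.symm.trans (joinedIn_wirtingerMatrix_sqrt (hf_qconvex _) hFs.source_mem
    hGs.source_mem)).trans hGs
end
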